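/- arXiv:1502.07526 — 3 statements merged into one kernel-verified Lean document; each statement's English description precedes it below -/
import Mathlib

section
/- If ε ≥ (2a(r·ln 2 − ln η))/ξ with a > 0, ξ > 0, 0 < η < 1, and Y is Erlang(r, ε) distributed, then Pr(a·Y ≥ ξ) ≤ η. -/
/-! The Gamma(α, ε) density is dominated on `[c, ∞)` by `2 ^ α * exp (-(ε * c) / 2)` times the
Gamma(α, ε / 2) density, since halving the rate costs a factor `2 ^ α` in the normalisation and
leaves a spare `exp (-(ε * y) / 2) ≤ exp (-(ε * c) / 2)`. Integrating gives the Chernoff-type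
tail bound `Pr(Y ≥ c) ≤ 2 ^ α * exp (-(ε * c) / 2)`, and the hypothesis on `ε` with
`c = ξ / a` makes the right-hand side at most `η`. -/

open MeasureTheory ProbabilityTheory

namespace ProbabilityTheory

lemma gammaPDF_le_mul_gammaPDF_half {α ε c y : ℝ} (hα : 0 < α) (hε : 0 ≤ ε) (hcy : c ≤ y) :
    gammaPDF α ε y ≤
      ENNReal.ofReal (2 ^ α * Real.exp (-(ε * c) / 2)) * gammaPDF α (ε / 2) y := by
  rcases lt_or_ge y 0 with hy | hy
  · simp [gammaPDF_of_neg hy]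
  rw [gammaPDF_of_nonneg hy, gammaPDF_of_nonneg hy, ← ENNReal.ofReal_mul (by positivity)]
  refine ENNReal.ofReal_le_ofReal ?_
  have hrate : ε ^ α = 2 ^ α * (ε / 2) ^ α := by
    rw [← Real.mul_rpow zero_le_two (by positivity)]; ring_nf
  have hsplit : Real.exp (-(ε * y)) = Real.exp (-(ε * y) / 2) * Real.exp (-(ε / 2 * y)) := by
    rw [← Real.exp_add]; ring_nf
  have htail : Real.exp (-(ε * y) / 2) ≤ Real.exp (-(ε * c) / 2) := by
    gcongr
  have hΓ : 0 < Real.Gamma α := Real.Gamma_pos_of_pos hα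
  calc ε ^ α / Real.Gamma α * y ^ (α - 1) * Real.exp (-(ε * y))
      = Real.exp (-(ε * y) / 2) * (2 ^ α *
          ((ε / 2) ^ α / Real.Gamma α * y ^ (α - 1) * Real.exp (-(ε / 2 * y)))) := by
        rw [hrate, hsplit]; ring
    _ ≤ Real.exp (-(ε * c) / 2) * (2 ^ α *
          ((ε / 2) ^ α / Real.Gamma α * y ^ (α - 1) * Real.exp (-(ε / 2 * y)))) := by
        gcongr
    _ = 2 ^ α * Real.exp (-(ε * c) / 2) *
          ((ε / 2) ^ α / Real.Gamma α * y ^ (α - 1) * Real.exp (-(ε / 2 * y))) := by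
        ring

lemma gammaMeasure_Ici_le {α ε : ℝ} (hα : 0 < α) (hε : 0 < ε) (c : ℝ) :
    gammaMeasure α ε (Set.Ici c) ≤ ENNReal.ofReal (2 ^ α * Real.exp (-(ε * c) / 2)) := by
  have := isProbabilityMeasure_gammaMeasure hα (half_pos hε)
  set C := ENNReal.ofReal (2 ^ α * Real.exp (-(ε * c) / 2))
  rw [gammaMeasure, withDensity_apply _ measurableSet_Ici]
  calc ∫⁻ y in Set.Ici c, gammaPDF α ε y
      ≤ ∫⁻ y in Set.Ici c, C * gammaPDF α (ε / 2) y :=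
        setLIntegral_mono (measurable_const.mul (measurable_gammaPDFReal _ _).ennreal_ofReal)
          fun _ hy ↦ gammaPDF_le_mul_gammaPDF_half hα hε.le hy
    _ = C * gammaMeasure α (ε / 2) (Set.Ici c) := by
        have hpdf : Measurable (gammaPDF α (ε / 2)) := (measurable_gammaPDFReal _ _).ennreal_ofReal
        rw [lintegral_const_mul C hpdf, gammaMeasure,
          withDensity_apply _ measurableSet_Ici]
    _ ≤ C := mul_le_of_le_one_right' prob_le_one

end ProbabilityTheory

lemma two_rpow_mul_exp_neg_half_le {α t η : ℝ} (hη : 0 < η)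
    (h : α * Real.log 2 - Real.log η ≤ t / 2) : 2 ^ α * Real.exp (-t / 2) ≤ η := by
  calc 2 ^ α * Real.exp (-t / 2) = Real.exp (α * Real.log 2 - t / 2) := by
        rw [Real.rpow_def_of_pos two_pos, ← Real.exp_add]; ring_nf
    _ ≤ Real.exp (Real.log η) := Real.exp_le_exp.mpr (by linarith)
    _ = η := Real.exp_log hη

theorem stmt_11 (r : ℕ) (hr : 0 < r) (a ξ η ε : ℝ) (ha : 0 < a) (hξ : 0 < ξ)
    (hη0 : 0 < η) (hη1 : η < 1)
    (hε : ε ≥ 2 * a * ((r : ℝ) * Real.log 2 - Real.log η) / ξ) :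
    (ProbabilityTheory.gammaMeasure (r : ℝ) ε) {y | a * y ≥ ξ}
      ≤ ENNReal.ofReal η := by
  have hK : 0 < (r : ℝ) * Real.log 2 - Real.log η := by
    have := Real.log_neg hη0 hη1
    have : 0 < (r : ℝ) * Real.log 2 := by positivity
    linarith
  have hε0 : 0 < ε := lt_of_lt_of_le (by positivity) hε
  have hset : {y : ℝ | a * y ≥ ξ} = Set.Ici (ξ / a) := by
    ext y; simp [div_le_iff₀ ha, mul_comm]
  have hεc : (r : ℝ) * Real.log 2 - Real.log η ≤ ε * (ξ / a) / 2 := by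
    rw [ge_iff_le, div_le_iff₀ hξ] at hε
    rw [le_div_iff₀ two_pos, mul_div_assoc', le_div_iff₀ ha]
    linarith
  rw [hset]
  exact (gammaMeasure_Ici_le (Nat.cast_pos.mpr hr) hε0 _).trans
    (ENNReal.ofReal_le_ofReal (two_rpow_mul_exp_neg_half_le hη0 hεc))
end

section
/- If ε ≥ (2a(Σ_{i=1}^r ln(i/(i − 1/2)) − ln η))/ξ with a > 0, ξ > 0, 0 < η < 1, and Y is the maximum of r i.i.d. Exp(ε) random variables, then Pr(a·Y ≥ ξ) ≤ η. -/
/-!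
By the union bound, `Pr(a · max X_i ≥ ξ) ≤ r · exp (-ε ξ / a)`. Writing `P = ∏_{i=1}^r i/(i - 1/2)`,
the hypothesis on `ε` says `exp (-ε ξ / a) ≤ (η / P)²`, and `P² ≥ 2r + 1`, so the bound is at
most `η² ≤ η`.
-/

open MeasureTheory ProbabilityTheory Set

lemma expMeasure_Ici {ε c : ℝ} (hε : 0 < ε) (hc : 0 ≤ c) :
    expMeasure ε (Ici c) = ENNReal.ofReal (Real.exp (-(ε * c))) := by
  have := isProbabilityMeasure_expMeasure hε
  have hatom : expMeasure ε {c} = 0 := by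
    unfold expMeasure gammaMeasure
    exact measure_singleton c
  have hexp : Real.exp (-(ε * c)) ≤ 1 := Real.exp_le_one_iff.mpr (by nlinarith)
  rw [← measure_congr (Ioi_ae_eq_Ici' hatom), ← compl_Iic,
    prob_compl_eq_one_sub measurableSet_Iic, ← ofReal_cdf, cdf_expMeasure_eq hε, if_pos hc,
    ← ENNReal.ofReal_one, ← ENNReal.ofReal_sub _ (by linarith), sub_sub_cancel]

lemma measure_le_sup'_le_sum {Ω ι α : Type*} [MeasurableSpace Ω] [LinearOrder α]
    (μ : Measure Ω) (s : Finset ι) (hs : s.Nonempty) (f : ι → Ω → α) (c : α) :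
    μ {ω | c ≤ s.sup' hs (f · ω)} ≤ ∑ i ∈ s, μ {ω | c ≤ f i ω} := by
  calc μ {ω | c ≤ s.sup' hs (f · ω)} ≤ μ (⋃ i ∈ s, {ω | c ≤ f i ω}) := by
        refine measure_mono fun ω hω => ?_
        simpa [Finset.le_sup'_iff] using hω
    _ ≤ _ := measure_biUnion_finset_le s _

lemma two_mul_add_one_le_prod_sq (r : ℕ) :
    2 * (r : ℝ) + 1 ≤ (∏ i ∈ Finset.range r, ((i + 1 : ℝ) / ((i + 1 : ℝ) - 1 / 2))) ^ 2 := by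
  induction r with
  | zero => simp
  | succ n ih =>
    have hn : (0 : ℝ) ≤ n := n.cast_nonneg
    -- `(2n + 2)² ≥ (2n + 1)(2n + 3)`
    have hstep : 2 * (n : ℝ) + 3 ≤ (2 * n + 1) * ((n + 1) / ((n + 1) - 1 / 2)) ^ 2 := by
      rw [div_pow, ← mul_div_assoc, le_div_iff₀ (by nlinarith)]
      nlinarith
    rw [Finset.prod_range_succ, mul_pow]
    push_cast
    nlinarith [mul_le_mul_of_nonneg_right ih (sq_nonneg ((n + 1 : ℝ) / ((n + 1) - 1 / 2)))]

lemma sum_log_ratio_nonneg (r : ℕ) :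
    0 ≤ ∑ i ∈ Finset.range r, Real.log ((i + 1 : ℝ) / ((i + 1 : ℝ) - 1 / 2)) :=
  Finset.sum_nonneg fun i _ => Real.log_nonneg <|
    (one_le_div (by linarith [(i.cast_nonneg : (0 : ℝ) ≤ i)])).mpr (by linarith)

lemma nat_mul_exp_neg_le {r : ℕ} {η t : ℝ} (hη0 : 0 < η) (hη1 : η ≤ 1)
    (ht : 2 * (∑ i ∈ Finset.range r, Real.log ((i + 1 : ℝ) / ((i + 1 : ℝ) - 1 / 2))
      - Real.log η) ≤ t) :
    r * Real.exp (-t) ≤ η := by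
  set P := ∏ i ∈ Finset.range r, ((i + 1 : ℝ) / ((i + 1 : ℝ) - 1 / 2))
  have hexp_sum : Real.exp (∑ i ∈ Finset.range r,
      Real.log ((i + 1 : ℝ) / ((i + 1 : ℝ) - 1 / 2))) = P := by
    rw [Real.exp_sum]
    refine Finset.prod_congr rfl fun i _ => Real.exp_log ?_
    have : (0 : ℝ) < i + 1 - 1 / 2 := by linarith [(i.cast_nonneg : (0 : ℝ) ≤ i)]
    positivity
  have hP : 2 * (r : ℝ) + 1 ≤ P ^ 2 := two_mul_add_one_le_prod_sq r
  calc r * Real.exp (-t)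
      ≤ r * (η / P) ^ 2 := by
        gcongr
        rw [← Real.exp_log hη0, ← hexp_sum, ← Real.exp_sub, ← Real.exp_nat_mul]
        exact Real.exp_le_exp.mpr (by push_cast; linarith)
    _ ≤ η ^ 2 := by
        rw [div_pow, mul_div_assoc', div_le_iff₀ (by nlinarith)]
        nlinarith [sq_nonneg η]
    _ ≤ η := by nlinarith

theorem stmt_12_general {Ω : Type*} [MeasurableSpace Ω] (μ : Measure Ω) [IsProbabilityMeasure μ]
    (r : ℕ) (hr : 0 < r) (a ξ η ε : ℝ) (ha : 0 < a) (hξ : 0 < ξ)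
    (hη0 : 0 < η) (hη1 : η < 1)
    (hε : ε ≥ 2 * a * ((∑ i ∈ Finset.range r,
        Real.log ((i + 1 : ℝ) / ((i + 1 : ℝ) - 1 / 2))) - Real.log η) / ξ)
    (X : Fin r → Ω → ℝ)
    (hmeas : ∀ i, Measurable (X i))
    (hdist : ∀ i, μ.map (X i) = ProbabilityTheory.expMeasure ε) :
    μ {ω | a * Finset.univ.sup'
        (Finset.univ_nonempty_iff.mpr (Fin.pos_iff_nonempty.mp hr)) (fun i => X i ω) ≥ ξ}
      ≤ ENNReal.ofReal η := by
  set c := ξ / a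
  have hεc : 2 * (∑ i ∈ Finset.range r, Real.log ((i + 1 : ℝ) / ((i + 1 : ℝ) - 1 / 2))
      - Real.log η) ≤ ε * c := by
    rw [ge_iff_le, div_le_iff₀ hξ] at hε
    rw [← mul_div_assoc, le_div_iff₀ ha]
    linarith
  have hε0 : 0 < ε := by
    have := sum_log_ratio_nonneg r
    nlinarith [Real.log_neg hη0 hη1, div_pos hξ ha]
  have htail : ∀ i, μ {ω | c ≤ X i ω} = ENNReal.ofReal (Real.exp (-(ε * c))) := fun i => by
    rw [← expMeasure_Ici hε0 (div_pos hξ ha).le, ← hdist i,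
      Measure.map_apply (hmeas i) measurableSet_Ici]
    rfl
  have hne : (Finset.univ : Finset (Fin r)).Nonempty := ⟨⟨0, hr⟩, Finset.mem_univ _⟩
  calc _ = μ {ω | c ≤ Finset.univ.sup' hne (fun i => X i ω)} := by
        simp only [c, ge_iff_le, div_le_iff₀ ha, mul_comm a]
    _ ≤ ∑ i, μ {ω | c ≤ X i ω} := measure_le_sup'_le_sum μ _ _ X c
    _ = ENNReal.ofReal (r * Real.exp (-(ε * c))) := by
        simp [htail, ENNReal.ofReal_mul]
    _ ≤ ENNReal.ofReal η := ENNReal.ofReal_le_ofReal (nat_mul_exp_neg_le hη0 hη1.le hεc)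

theorem stmt_12 {Ω : Type*} [MeasurableSpace Ω] (μ : Measure Ω) [IsProbabilityMeasure μ]
    (r : ℕ) (hr : 0 < r) (a ξ η ε : ℝ) (ha : 0 < a) (hξ : 0 < ξ)
    (hη0 : 0 < η) (hη1 : η < 1)
    (hε : ε ≥ 2 * a * ((∑ i ∈ Finset.range r,
        Real.log ((i + 1 : ℝ) / ((i + 1 : ℝ) - 1 / 2))) - Real.log η) / ξ)
    (X : Fin r → Ω → ℝ)
    (hmeas : ∀ i, Measurable (X i))
    (hindep : iIndepFun X μ)
    (hdist : ∀ i, μ.map (X i) = ProbabilityTheory.expMeasure ε) :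
    μ {ω | a * Finset.univ.sup'
        (Finset.univ_nonempty_iff.mpr (Fin.pos_iff_nonempty.mp hr)) (fun i => X i ω) ≥ ξ}
      ≤ ENNReal.ofReal η :=
  stmt_12_general μ r hr a ξ η ε ha hξ hη0 hη1 hε X hmeas hdist
end

section
/- Let W be m×n, B be m×r, L be r×n real matrices with ‖W − BL‖_F ≤ γ, and let X₁,…,X_r be i.i.d. zero-mean Laplace random variables with scale Δ(L)/ε where Δ(L) = max_j Σ_i |L_{ij}| ≤ 1. Then for any D ∈ ℝⁿ, E[‖B(LD + X) − WD‖₂²] ≤ 2·tr(BᵀB)/ε² + γ²·Σ_i D_i². -/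
open MeasureTheory ProbabilityTheory Matrix

noncomputable def laplaceMeasure (b : ℝ) : Measure ℝ :=
  MeasureTheory.volume.withDensity fun x => ENNReal.ofReal ((2 * b)⁻¹ * Real.exp (-|x| / b))

noncomputable def sensL1 {r n : ℕ} (L : Matrix (Fin r) (Fin n) ℝ) : ℝ :=
  ⨆ j, ∑ i, |L i j|

/-
Write `B (L D + X) - W D = (B L - W) D + B X`. Row by row, the noise part `∑ⱼ Bᵢⱼ Xⱼ` has mean
zero and, by independence, variance `∑ⱼ Bᵢⱼ² Var Xⱼ`, so the expected squared error is exactly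
`‖(B L - W) D‖² + Var X · tr(Bᵀ B)`. A Laplace variable of scale `b` has variance `2 b²`, and
`b = Δ(L)/ε ≤ 1/ε`; the bias is bounded by Cauchy–Schwarz in each row, giving `‖W - B L‖_F² ‖D‖²`.
-/

open Real Nat Finset

section Laplace

variable {b : ℝ}

lemma integral_Ioi_pow_mul_exp_neg_div (hb : 0 < b) (k : ℕ) :
    ∫ x in Set.Ioi (0 : ℝ), x ^ k * exp (-x / b) = b ^ (k + 1) * k ! := by
  have h := integral_rpow_mul_exp_neg_mul_Ioi (a := (k : ℝ) + 1) (r := 1 / b)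
    (by positivity) (by positivity)
  simp only [add_sub_cancel_right, rpow_natCast, one_div_one_div] at h
  rw [← Gamma_nat_eq_factorial, ← rpow_natCast, Nat.cast_add_one, ← h]
  congr with x
  ring_nf

lemma integral_abs_pow_mul_exp_neg_abs_div (hb : 0 < b) (k : ℕ) :
    ∫ x, |x| ^ k * exp (-|x| / b) = 2 * b ^ (k + 1) * k ! := by
  rw [integral_comp_abs (f := fun x => x ^ k * exp (-x / b)),
    integral_Ioi_pow_mul_exp_neg_div hb, mul_assoc]

-- The integral is positive, whereas a non-integrable function has integral `0`.
lemma integrable_abs_pow_mul_exp_neg_abs_div (hb : 0 < b) (k : ℕ) :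
    Integrable fun x : ℝ => |x| ^ k * exp (-|x| / b) :=
  Integrable.of_integral_ne_zero <| by
    rw [integral_abs_pow_mul_exp_neg_abs_div hb]; positivity

lemma integral_laplaceMeasure (hb : 0 ≤ b) (g : ℝ → ℝ) :
    ∫ x, g x ∂laplaceMeasure b = ∫ x, (2 * b)⁻¹ * exp (-|x| / b) * g x := by
  rw [laplaceMeasure, integral_withDensity_eq_integral_toReal_smul (by fun_prop)
    (ae_of_all _ fun _ => ENNReal.ofReal_lt_top)]
  congr with x
  rw [ENNReal.toReal_ofReal (by positivity), smul_eq_mul]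

lemma integrable_laplaceMeasure_iff (hb : 0 ≤ b) (g : ℝ → ℝ) :
    Integrable g (laplaceMeasure b) ↔
      Integrable fun x => (2 * b)⁻¹ * exp (-|x| / b) * g x := by
  rw [laplaceMeasure, integrable_withDensity_iff_integrable_smul' (by fun_prop)
    (ae_of_all _ fun _ => ENNReal.ofReal_lt_top)]
  congr! with x
  rw [ENNReal.toReal_ofReal (by positivity)]

lemma memLp_id_two_laplaceMeasure (hb : 0 < b) : MemLp id 2 (laplaceMeasure b) := by
  rw [memLp_two_iff_integrable_sq aestronglyMeasurable_id, integrable_laplaceMeasure_iff hb.le]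
  convert (integrable_abs_pow_mul_exp_neg_abs_div hb 2).const_mul (2 * b)⁻¹ using 2 with x
  rw [id, sq_abs]
  ring

lemma integral_id_laplaceMeasure (hb : 0 ≤ b) : ∫ x, x ∂laplaceMeasure b = 0 := by
  rw [integral_laplaceMeasure hb]
  have hodd := integral_neg_eq_self (fun x => (2 * b)⁻¹ * exp (-|x| / b) * x) volume
  simp only [abs_neg, mul_neg, integral_neg] at hodd
  linarith

lemma variance_id_laplaceMeasure (hb : 0 < b) : Var[id; laplaceMeasure b] = 2 * b ^ 2 := by
  rw [variance_eq_integral measurable_id.aemeasurable]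
  simp only [id, integral_id_laplaceMeasure hb.le, sub_zero]
  rw [integral_laplaceMeasure hb.le]
  calc ∫ x, (2 * b)⁻¹ * exp (-|x| / b) * x ^ 2 ∂volume
      = (2 * b)⁻¹ * ∫ x, |x| ^ 2 * exp (-|x| / b) := by
        rw [← integral_const_mul]
        congr with x
        rw [sq_abs]
        ring
    _ = 2 * b ^ 2 := by
        rw [integral_abs_pow_mul_exp_neg_abs_div hb]
        field_simp
        norm_num [Nat.factorial]
        ring

end Laplace

lemma Matrix.trace_transpose_mul_self {κ ι R : Type*} [Fintype κ] [Fintype ι] [Semiring R]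
    (A : Matrix κ ι R) : (Aᵀ * A).trace = ∑ i, ∑ j, A i j ^ 2 := by
  simp only [trace, diag, mul_apply, transpose_apply, sq]
  exact sum_comm

lemma sum_sq_mulVec_le {κ ι : Type*} [Fintype κ] [Fintype ι] (A : Matrix κ ι ℝ) (v : ι → ℝ) :
    ∑ i, (A *ᵥ v) i ^ 2 ≤ (∑ i, ∑ j, A i j ^ 2) * ∑ j, v j ^ 2 := by
  rw [sum_mul]
  exact sum_le_sum fun i _ => sum_mul_sq_le_sq_mul_sq univ (A i) v

section Noise

variable {Ω ι : Type*} [MeasurableSpace Ω] {μ : Measure Ω} [Fintype ι] {X : ι → Ω → ℝ}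

lemma variance_sum_const_mul_of_pairwise_indepFun (hX : ∀ j, MemLp (X j) 2 μ)
    (hindep : Pairwise fun j k => X j ⟂ᵢ[μ] X k) (a : ι → ℝ) :
    Var[fun ω => ∑ j, a j * X j ω; μ] = ∑ j, a j ^ 2 * Var[X j; μ] := by
  have hsum := IndepFun.variance_sum (s := univ) (X := fun j ω => a j * X j ω)
    (fun j _ => (hX j).const_mul (a j))
    (fun j _ k _ hjk => (hindep hjk).comp (measurable_const_mul (a j)) (measurable_const_mul (a k)))
  simp only [Finset.sum_fn] at hsum
  simp only [hsum, variance_const_mul]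

variable [IsProbabilityMeasure μ]

lemma integral_sq_const_add_sum_mul (hX : ∀ j, MemLp (X j) 2 μ)
    (hindep : Pairwise fun j k => X j ⟂ᵢ[μ] X k) (hmean : ∀ j, μ[X j] = 0) (c : ℝ) (a : ι → ℝ) :
    ∫ ω, (c + ∑ j, a j * X j ω) ^ 2 ∂μ = c ^ 2 + ∑ j, a j ^ 2 * Var[X j; μ] := by
  have hY : MemLp (fun ω => ∑ j, a j * X j ω) 2 μ :=
    memLp_finsetSum _ fun j _ => (hX j).const_mul (a j)
  have hYint := hY.integrable one_le_two
  have hmeanY : ∫ ω, c + ∑ j, a j * X j ω ∂μ = c := by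
    rw [integral_add (integrable_const c) hYint,
      integral_finsetSum _ fun j _ => ((hX j).integrable one_le_two).const_mul (a j)]
    simp [integral_const_mul, hmean]
  have hvar := variance_eq_sub (X := fun ω => c + ∑ j, a j * X j ω) ((memLp_const c).add hY)
  rw [variance_const_add hY.aestronglyMeasurable,
    variance_sum_const_mul_of_pairwise_indepFun hX hindep a] at hvar
  simp only [Pi.pow_apply, hmeanY] at hvar
  linarith

lemma integral_sum_sq_add_mulVec (hX : ∀ j, MemLp (X j) 2 μ)
    (hindep : Pairwise fun j k => X j ⟂ᵢ[μ] X k) (hmean : ∀ j, μ[X j] = 0) {σ2 : ℝ}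
    (hvar : ∀ j, Var[X j; μ] = σ2) {κ : Type*} [Fintype κ] (c : κ → ℝ) (A : Matrix κ ι ℝ) :
    ∫ ω, ∑ i, (c i + (A *ᵥ fun j => X j ω) i) ^ 2 ∂μ = ∑ i, c i ^ 2 + σ2 * (Aᵀ * A).trace := by
  have hrow (i : κ) : MemLp (fun ω => c i + (A *ᵥ fun j => X j ω) i) 2 μ :=
    (memLp_const (c i)).add (memLp_finsetSum _ fun j _ => (hX j).const_mul (A i j))
  rw [integral_finsetSum _ fun i _ => (hrow i).integrable_sq, trace_transpose_mul_self, mul_sum,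
    ← sum_add_distrib]
  refine sum_congr rfl fun i _ => ?_
  simp only [mulVec, dotProduct, integral_sq_const_add_sum_mul hX hindep hmean, hvar, ← sum_mul]
  ring

end Noise

section LaplaceNoise

variable {Ω : Type*} [MeasurableSpace Ω] {μ : Measure Ω} {Y : Ω → ℝ} {b : ℝ}

lemma memLp_two_of_map_eq_laplaceMeasure (hY : AEMeasurable Y μ) (hb : 0 < b)
    (h : μ.map Y = laplaceMeasure b) : MemLp Y 2 μ :=
  (memLp_map_measure_iff aestronglyMeasurable_id hY).mp (h ▸ memLp_id_two_laplaceMeasure hb)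

lemma integral_eq_zero_of_map_eq_laplaceMeasure (hY : AEMeasurable Y μ) (hb : 0 ≤ b)
    (h : μ.map Y = laplaceMeasure b) : μ[Y] = 0 := by
  rw [← integral_id_laplaceMeasure hb, ← h]
  exact (integral_map hY aestronglyMeasurable_id).symm

lemma variance_eq_of_map_eq_laplaceMeasure (hY : AEMeasurable Y μ) (hb : 0 < b)
    (h : μ.map Y = laplaceMeasure b) : Var[Y; μ] = 2 * b ^ 2 := by
  rw [← variance_id_map hY, h, variance_id_laplaceMeasure hb]

end LaplaceNoise

theorem stmt_14_general {Ω : Type*} [MeasurableSpace Ω] (μ : Measure Ω) [IsProbabilityMeasure μ]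
    {m r n : ℕ} (W : Matrix (Fin m) (Fin n) ℝ)
    (B : Matrix (Fin m) (Fin r) ℝ) (L : Matrix (Fin r) (Fin n) ℝ)
    (γ ε : ℝ) (hε : 0 < ε)
    (hF : Real.sqrt (∑ i, ∑ j, ((W - B * L) i j) ^ 2) ≤ γ)
    (hΔpos : 0 < sensL1 L) (hΔ : sensL1 L ≤ 1)
    (X : Fin r → Ω → ℝ)
    (hmeas : ∀ i, Measurable (X i))
    (hindep : iIndepFun X μ)
    (hdist : ∀ i, μ.map (X i) = laplaceMeasure (sensL1 L / ε))
    (D : Fin n → ℝ) :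
    ∫ ω, ∑ i, (B.mulVec (fun j => L.mulVec D j + X j ω) i - W.mulVec D i) ^ 2 ∂μ
      ≤ 2 * (Bᵀ * B).trace / ε ^ 2 + γ ^ 2 * ∑ i, (D i) ^ 2 := by
  have hb : 0 < sensL1 L / ε := div_pos hΔpos hε
  have hsplit (ω : Ω) (i : Fin m) :
      B.mulVec (fun j => L.mulVec D j + X j ω) i - W.mulVec D i
        = ((B * L - W) *ᵥ D) i + (B *ᵥ fun j => X j ω) i := by
    rw [show (fun j => L.mulVec D j + X j ω) = L *ᵥ D + fun j => X j ω from rfl, mulVec_add,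
      mulVec_mulVec, sub_mulVec]
    simp only [Pi.add_apply, Pi.sub_apply]
    ring
  simp_rw [hsplit]
  rw [integral_sum_sq_add_mulVec
    (fun j => memLp_two_of_map_eq_laplaceMeasure (hmeas j).aemeasurable hb (hdist j))
    (fun j k hjk => hindep.indepFun hjk)
    (fun j => integral_eq_zero_of_map_eq_laplaceMeasure (hmeas j).aemeasurable hb.le (hdist j))
    (fun j => variance_eq_of_map_eq_laplaceMeasure (hmeas j).aemeasurable hb (hdist j))]
  have hbias : ∑ i, ((B * L - W) *ᵥ D) i ^ 2 ≤ γ ^ 2 * ∑ i, D i ^ 2 := by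
    have hfrob : ∑ i, ∑ j, (W - B * L) i j ^ 2 ≤ γ ^ 2 := (Real.sqrt_le_iff.mp hF).2
    rw [← neg_sub W, neg_mulVec]
    simp only [Pi.neg_apply, neg_sq]
    exact (sum_sq_mulVec_le (W - B * L) D).trans (by gcongr)
  have hnoise : 2 * (sensL1 L / ε) ^ 2 * (Bᵀ * B).trace ≤ 2 * (Bᵀ * B).trace / ε ^ 2 := by
    have htrace : 0 ≤ (Bᵀ * B).trace := by rw [trace_transpose_mul_self]; positivity
    have hΔsq : sensL1 L ^ 2 ≤ 1 := pow_le_one₀ hΔpos.le hΔ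
    calc 2 * (sensL1 L / ε) ^ 2 * (Bᵀ * B).trace
        = 2 * (Bᵀ * B).trace / ε ^ 2 * sensL1 L ^ 2 := by ring
      _ ≤ 2 * (Bᵀ * B).trace / ε ^ 2 := mul_le_of_le_one_right (by positivity) hΔsq
  linarith

theorem stmt_14 {Ω : Type*} [MeasurableSpace Ω] (μ : Measure Ω) [IsProbabilityMeasure μ]
    {m r n : ℕ} (W : Matrix (Fin m) (Fin n) ℝ)
    (B : Matrix (Fin m) (Fin r) ℝ) (L : Matrix (Fin r) (Fin n) ℝ)
    (γ ε : ℝ) (hε : 0 < ε) (hγ : 0 ≤ γ)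
    (hF : Real.sqrt (∑ i, ∑ j, ((W - B * L) i j) ^ 2) ≤ γ)
    (hΔpos : 0 < sensL1 L) (hΔ : sensL1 L ≤ 1)
    (X : Fin r → Ω → ℝ)
    (hmeas : ∀ i, Measurable (X i))
    (hindep : iIndepFun X μ)
    (hdist : ∀ i, μ.map (X i) = laplaceMeasure (sensL1 L / ε))
    (D : Fin n → ℝ) :
    ∫ ω, ∑ i, (B.mulVec (fun j => L.mulVec D j + X j ω) i - W.mulVec D i) ^ 2 ∂μ
      ≤ 2 * (Bᵀ * B).trace / ε ^ 2 + γ ^ 2 * ∑ i, (D i) ^ 2 :=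
  stmt_14_general μ W B L γ ε hε hF hΔpos hΔ X hmeas hindep hdist D
end
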